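/- Let f : X → X be a function on a set X, let n ≥ 1, and let P ⊆ X be a finite subset such that f(P) ⊆ P and f^n(x) = x for every x ∈ P. Let Z ⊆ X and let δ > 0 be a real number with |P ∩ Z| ≥ δ·|P|. Then for every natural number N ≥ 2 with N·δ > 2 there exist indices 1 ≤ s < t ≤ N such that |P ∩ f^s(Z) ∩ f^t(Z)| ≥ (δ/(N−1))·|P|, where f^s(Z) denotes the image of Z under the s-th iterate of f. -/

import Mathlib

/-!
Put `A_k = P ∩ f^k(Z)`. Since `f` permutes the finite set `P`, each `A_k` has at least
`δ|P|` elements. Counting incidences between points of `P` and ordered pairs `k ≠ l`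
(a point in `g` of the sets `A_1, …, A_N` lies in `g(g-1) ≥ 2g - 2` pairwise intersections)
gives `∑_{k ≠ l} |A_k ∩ A_l| ≥ 2Nδ|P| - 2|P| ≥ Nδ|P|` when `Nδ ≥ 2`, and one of the
`N(N-1)` terms is at least the average.
-/

open Finset

namespace Finset

variable {ι α : Type*} [DecidableEq α]

theorem sum_card_eq_sum_card_filter_mem {s : Finset α} {J : Finset ι} {B : ι → Finset α}
    (hB : ∀ j ∈ J, B j ⊆ s) : ∑ j ∈ J, #(B j) = ∑ x ∈ s, #{j ∈ J | x ∈ B j} := by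
  calc ∑ j ∈ J, #(B j) = ∑ j ∈ J, #(s ∩ B j) :=
        sum_congr rfl fun j hj ↦ by rw [inter_eq_right.2 (hB j hj)]
    _ = ∑ x ∈ s, #{j ∈ J | x ∈ B j} := by
        simp_rw [← filter_mem_eq_inter, card_eq_sum_ones, sum_filter]
        exact sum_comm

theorem filter_offDiag_mem_inter (I : Finset ι) (A : ι → Finset α) (x : α) :
    {q ∈ I.offDiag | x ∈ A q.1 ∩ A q.2} = {i ∈ I | x ∈ A i}.offDiag := by
  ext q
  simp only [mem_filter, mem_offDiag, mem_inter]
  tauto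

theorem two_mul_sum_card_le_two_mul_card_add_sum_offDiag {s : Finset α} {I : Finset ι}
    {A : ι → Finset α} (hA : ∀ i ∈ I, A i ⊆ s) :
    2 * ∑ i ∈ I, #(A i) ≤ 2 * #s + ∑ q ∈ I.offDiag, #(A q.1 ∩ A q.2) := by
  have hA₂ : ∀ q ∈ I.offDiag, A q.1 ∩ A q.2 ⊆ s := fun q hq ↦
    inter_subset_left.trans (hA q.1 (mem_offDiag.1 hq).1)
  rw [sum_card_eq_sum_card_filter_mem hA, sum_card_eq_sum_card_filter_mem hA₂, mul_sum,
    mul_comm, ← smul_eq_mul, ← sum_const, ← sum_add_distrib]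
  refine sum_le_sum fun x _ ↦ ?_
  rw [filter_offDiag_mem_inter, offDiag_card]
  generalize #{i ∈ I | x ∈ A i} = g
  rcases le_or_gt g 2 with h | h
  · interval_cases g <;> simp
  · have : 3 * g ≤ g * g := Nat.mul_le_mul_right g h
    omega

theorem exists_mem_offDiag_le_card_inter {s : Finset α} {I : Finset ι} {A : ι → Finset α}
    (hA : ∀ i ∈ I, A i ⊆ s) (hI : 1 < #I) {δ : ℝ} (hδA : ∀ i ∈ I, δ * #s ≤ #(A i))
    (hδI : 2 ≤ #I * δ) :
    ∃ q ∈ I.offDiag, δ / (#I - 1) * #s ≤ #(A q.1 ∩ A q.2) := by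
  have hI₁ : (0 : ℝ) < #I - 1 := by
    have : (1 : ℝ) < #I := by exact_mod_cast hI
    linarith
  have hoff : (#I.offDiag : ℝ) = #I * (#I - 1) := by
    rw [offDiag_card, Nat.cast_sub (Nat.le_mul_self _), Nat.cast_mul]
    ring
  have hcount : 2 * ∑ i ∈ I, (#(A i) : ℝ) ≤ 2 * #s + ∑ q ∈ I.offDiag, (#(A q.1 ∩ A q.2) : ℝ) := by
    exact_mod_cast two_mul_sum_card_le_two_mul_card_add_sum_offDiag hA
  have hsum : #I * (δ * #s) ≤ ∑ i ∈ I, (#(A i) : ℝ) := by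
    simpa using card_nsmul_le_sum I _ _ hδA
  refine exists_le_of_sum_le ?_ ?_
  · obtain ⟨i, hi, j, hj, hij⟩ := one_lt_card.1 hI
    exact ⟨(i, j), mem_offDiag.2 ⟨hi, hj, hij⟩⟩
  · have hs : (0 : ℝ) ≤ #s := Nat.cast_nonneg _
    rw [sum_const, nsmul_eq_mul, hoff]
    field_simp
    nlinarith

end Finset

namespace Set

variable {α β : Type*}

theorem injOn_of_iterate_eq_self {f : α → α} {P : Set α} {n : ℕ} (hn : 1 ≤ n)
    (hper : ∀ x ∈ P, f^[n] x = x) : InjOn f P :=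
  LeftInvOn.injOn (f₁' := f^[n - 1]) fun x hx ↦ by
    rw [← Function.iterate_succ_apply, Nat.succ_eq_add_one, Nat.sub_add_cancel hn, hper x hx]

theorem ncard_inter_le_ncard_inter_image {g : α → β} {P : Set α} {Q : Set β}
    (hmaps : MapsTo g P Q) (hinj : InjOn g P) (hQ : Q.Finite) (Z : Set α) :
    (P ∩ Z).ncard ≤ (Q ∩ g '' Z).ncard := by
  rw [← (hinj.mono inter_subset_left).ncard_image]
  refine ncard_le_ncard ?_ (hQ.subset inter_subset_left)
  rintro _ ⟨x, ⟨hxP, hxZ⟩, rfl⟩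
  exact ⟨hmaps hxP, x, hxZ, rfl⟩

theorem ncard_coe_finset_inter (s : Finset α) (W : Set α) [DecidablePred (· ∈ W)] :
    ((s : Set α) ∩ W).ncard = #{x ∈ s | x ∈ W} := by
  rw [← ncard_coe_finset, coe_filter]
  rfl

end Set

theorem exists_large_intersection_of_images_general
    {X : Type*} (f : X → X) (n : ℕ) (hn : 1 ≤ n)
    (P : Set X) (hPfin : P.Finite)
    (hinv : f '' P ⊆ P) (hper : ∀ x ∈ P, f^[n] x = x)
    (Z : Set X) (δ : ℝ)
    (hZ : δ * (P.ncard : ℝ) ≤ ((P ∩ Z).ncard : ℝ)) :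
    ∀ N : ℕ, 2 ≤ N → 2 < (N : ℝ) * δ →
      ∃ s t : ℕ, 1 ≤ s ∧ s < t ∧ t ≤ N ∧
        (δ / ((N : ℝ) - 1)) * (P.ncard : ℝ)
          ≤ ((P ∩ (f^[s] '' Z) ∩ (f^[t] '' Z)).ncard : ℝ) := by
  classical
  intro N hN hNδ
  have hmaps : Set.MapsTo f P P := Set.mapsTo_iff_image_subset.2 hinv
  have hinj := Set.injOn_of_iterate_eq_self hn hper
  obtain ⟨P, rfl⟩ := hPfin.exists_finset_coe
  let A : ℕ → Finset X := fun k ↦ {x ∈ P | x ∈ f^[k] '' Z}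
  have hA : ∀ k ∈ Icc 1 N, δ * #P ≤ #(A k) := by
    intro k _
    have := Set.ncard_inter_le_ncard_inter_image (hmaps.iterate k) (hinj.iterate hmaps k)
      P.finite_toSet Z
    rw [Set.ncard_coe_finset_inter P (f^[k] '' Z)] at this
    rw [← Set.ncard_coe_finset]
    exact hZ.trans (by exact_mod_cast this)
  have hA_inter : ∀ s t, ((P : Set X) ∩ f^[s] '' Z ∩ f^[t] '' Z).ncard = #(A s ∩ A t) := by
    intro s t
    rw [Set.inter_assoc, Set.ncard_coe_finset_inter, ← filter_and]
    rfl
  have hcard : #(Icc 1 N) = N := by simp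
  obtain ⟨⟨s, t⟩, hst, hlarge⟩ := exists_mem_offDiag_le_card_inter (fun k _ ↦ filter_subset _ P)
    (by omega) hA (by rw [hcard]; exact hNδ.le)
  simp only [mem_offDiag, mem_Icc] at hst
  rw [hcard] at hlarge
  rw [Set.ncard_coe_finset]
  rcases hst.2.2.lt_or_gt with hlt | hlt
  · exact ⟨s, t, hst.1.1, hlt, hst.2.1.2, by rwa [hA_inter]⟩
  · exact ⟨t, s, hst.2.1.1, hlt, hst.1.2, by rwa [hA_inter, inter_comm]⟩

/-- If a finite `f`-invariant set `P` of points fixed by `f^[n]` meets `Z` in at least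
`δ|P|` points, then for any `N ≥ 2` with `N·δ > 2` there are `1 ≤ s < t ≤ N` such that
`|P ∩ f^[s](Z) ∩ f^[t](Z)| ≥ (δ/(N−1))·|P|`. -/
theorem exists_large_intersection_of_images
    {X : Type*} (f : X → X) (n : ℕ) (hn : 1 ≤ n)
    (P : Set X) (hPfin : P.Finite)
    (hinv : f '' P ⊆ P) (hper : ∀ x ∈ P, f^[n] x = x)
    (Z : Set X) (δ : ℝ) (hδ : 0 < δ)
    (hZ : δ * (P.ncard : ℝ) ≤ ((P ∩ Z).ncard : ℝ)) :
    ∀ N : ℕ, 2 ≤ N → 2 < (N : ℝ) * δ →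
      ∃ s t : ℕ, 1 ≤ s ∧ s < t ∧ t ≤ N ∧
        (δ / ((N : ℝ) - 1)) * (P.ncard : ℝ)
          ≤ ((P ∩ (f^[s] '' Z) ∩ (f^[t] '' Z)).ncard : ℝ) :=
  exists_large_intersection_of_images_general f n hn P hPfin hinv hper Z δ hZ
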